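/- arXiv:1712.05020 — 2 statements merged into one kernel-verified Lean document; each statement's English description precedes it below -/
import Mathlib

section
/- For every natural number h ≥ 3, (b − 2)^h < d(h, 2). -/
/-- `α = b + √(b² − 4b)`. -/
noncomputable def alpha (b : ℝ) : ℝ := b + Real.sqrt (b ^ 2 - 4 * b)

/-- `γ = b − √(b² − 4b)`. -/
noncomputable def gamma (b : ℝ) : ℝ := b - Real.sqrt (b ^ 2 - 4 * b)

/-- The recurrence `d(0,k) = k`, `d(1,k) = k·b − b`, `d(δ,k) = b·(d(δ−1,k) − d(δ−2,k))`. -/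
noncomputable def d (b k : ℝ) : ℕ → ℝ
  | 0 => k
  | 1 => k * b - b
  | (δ + 2) => b * (d b k (δ + 1) - d b k δ)

/-- `D(h,k) = Σ_{δ=0}^{h} d(δ,k)`. -/
noncomputable def D (b k : ℝ) (h : ℕ) : ℝ := ∑ δ ∈ Finset.range (h + 1), d b k δ

/-- Depthwise average degree: `d̄(0,k) = k`, `d̄(δ,k) = d(δ,k)/d(δ−1,k)` for `δ ≥ 1`. -/
noncomputable def dbar (b k : ℝ) : ℕ → ℝ
  | 0 => k
  | (δ + 1) => d b k (δ + 1) / d b k δ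

/-- Average degree: `D̄(0,k) = k`, `D̄(h,k) = D(h,k)/(D(h−1,k)+1)` for `h ≥ 1`. -/
noncomputable def Dbar (b k : ℝ) : ℕ → ℝ
  | 0 => k
  | (h + 1) => D b k (h + 1) / (D b k h + 1)


lemma d_succ2 (b k : ℝ) (n : ℕ) :
    d b k (n + 2) = b * (d b k (n + 1) - d b k n) := by simp [d]

lemma key_lem (b : ℝ) (hb : b > 4) : ∀ n : ℕ,
    0 < d b 2 (n + 1) ∧ (b - 2) * d b 2 (n + 1) ≤ d b 2 (n + 2) := by
  intro n
  induction n with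
  | zero =>
    have e1 : d b 2 1 = b := by simp [d]; ring
    have e2 : d b 2 2 = b * (b - 2) := by rw [d_succ2, e1]; simp [d]
    rw [e1, e2]
    constructor
    · linarith
    · nlinarith
  | succ m ih =>
    obtain ⟨h1, h2⟩ := ih
    have hpos : 0 < d b 2 (m + 2) := lt_of_lt_of_le (by nlinarith) h2
    refine ⟨hpos, ?_⟩
    rw [d_succ2 b 2 (m + 1)]
    nlinarith [h1, h2]

theorem stmt_3 (b : ℝ) (hb : b > 4) (h : ℕ) (hh : 3 ≤ h) :
    (b - 2) ^ h < d b 2 h := by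
  induction h, hh using Nat.le_induction with
  | base =>
    have e1 : d b 2 1 = b := by simp [d]; ring
    have e2 : d b 2 2 = b * (b - 2) := by rw [d_succ2, e1]; simp [d]
    have e3 : d b 2 3 = b * (b * (b - 2) - b) := by
      rw [show (3:ℕ) = 1 + 2 by rfl, d_succ2, e1, e2]
    rw [e3]; nlinarith
  | succ n hn ih =>
    obtain ⟨h1, h2⟩ := key_lem b hb n
    calc (b - 2) ^ (n + 1) = (b - 2) * (b - 2) ^ n := by ring
    _ < (b - 2) * d b 2 n := by
        apply mul_lt_mul_of_pos_left ih; linarith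
    _ ≤ d b 2 (n + 1) := by
        rcases n with _ | m
        · omega
        · exact (key_lem b hb m).2
end

section
/- For every natural number h and all real numbers k, k' with 2 ≤ k < k', D̄(h, k) < D̄(h, k'); that is, D̄(h, k) is strictly increasing in k. -/
/-- The homogeneous solution `f 0 = 1`, `f 1 = b`. -/
noncomputable def ff (b : ℝ) : ℕ → ℝ
  | 0 => 1
  | 1 => b
  | (n + 2) => b * (ff b (n + 1) - ff b n)

/-- Partial sums of `ff`. -/
noncomputable def Sf (b : ℝ) (h : ℕ) : ℝ := ∑ δ ∈ Finset.range (h + 1), ff b δ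

lemma grow (b : ℝ) (hb : 4 ≤ b) (u : ℕ → ℝ)
    (hrec : ∀ n, u (n + 2) = b * (u (n + 1) - u n))
    (h0 : 0 < u 0) (h1 : 2 * u 0 ≤ u 1) :
    ∀ n, 0 < u n ∧ 2 * u n ≤ u (n + 1) := by
  intro n
  induction n with
  | zero => exact ⟨h0, h1⟩
  | succ m ih =>
    obtain ⟨hp, hg⟩ := ih
    have hp1 : 0 < u (m + 1) := by linarith
    refine ⟨hp1, ?_⟩
    have h4 : (0:ℝ) ≤ (b - 4) * (u (m + 1) - u m) :=
      mul_nonneg (by linarith) (by linarith)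
    have := hrec m
    nlinarith

lemma ff_pos (b : ℝ) (hb : b > 4) : ∀ n, 0 < ff b n := by
  intro n
  exact (grow b (le_of_lt hb) (ff b) (fun n => rfl)
    (by norm_num [ff]) (by norm_num [ff]; linarith) n).1

lemma Sf_succ (b : ℝ) (m : ℕ) : Sf b (m + 1) = Sf b m + ff b (m + 1) :=
  Finset.sum_range_succ _ _

lemma Sf_pos (b : ℝ) (hb : b > 4) (m : ℕ) : 0 < Sf b m := by
  apply Finset.sum_pos (fun i _ => ff_pos b hb i)
  exact Finset.nonempty_range_iff.mpr (Nat.succ_ne_zero m)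

lemma Sf_eq (b : ℝ) (m : ℕ) : Sf b (m + 1) = b * ff b m + 1 := by
  induction m with
  | zero =>
    rw [Sf_succ b 0]
    have h0 : Sf b 0 = 1 := by simp [Sf, ff]
    rw [h0, show ff b 1 = b from rfl, show ff b 0 = 1 from rfl]; ring
  | succ n ih =>
    rw [Sf_succ, ih, show ff b (n + 2) = b * (ff b (n + 1) - ff b n) from rfl]
    ring

lemma d_lin (b k : ℝ) : ∀ n, d b k (n + 1) = k * ff b (n + 1) - b * ff b n := by
  have key : ∀ n, d b k (n + 1) = k * ff b (n + 1) - b * ff b n ∧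
      d b k (n + 2) = k * ff b (n + 2) - b * ff b (n + 1) := by
    intro n
    induction n with
    | zero =>
      constructor
      · show k * b - b = k * ff b 1 - b * ff b 0
        norm_num [ff]
      · show b * (d b k 1 - d b k 0) = _
        show b * ((k * b - b) - k) = k * ff b 2 - b * ff b 1
        show b * ((k * b - b) - k) = k * (b * (ff b 1 - ff b 0)) - b * ff b 1
        norm_num [ff]; ring
    | succ m ih =>
      obtain ⟨ih1, ih2⟩ := ih
      refine ⟨ih2, ?_⟩
      show b * (d b k (m + 2) - d b k (m + 1)) = _
      rw [ih1, ih2, show ff b (m + 3) = b * (ff b (m + 2) - ff b (m + 1)) from rfl,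
        show ff b (m + 2) = b * (ff b (m + 1) - ff b m) from rfl]
      ring
  exact fun n => (key n).1

lemma D_lin (b k : ℝ) : ∀ h, D b k (h + 1) = k * Sf b (h + 1) - b * Sf b h := by
  intro h
  induction h with
  | zero =>
    have hD : D b k 1 = d b k 0 + d b k 1 := by
      simp [D, Finset.sum_range_succ]
    rw [hD, d_lin b k 0, Sf_succ b 0]
    have h0 : Sf b 0 = 1 := by simp [Sf, ff]
    rw [h0, show ff b 1 = b from rfl, show d b k 0 = k from rfl, show ff b 0 = 1 from rfl]
    ring
  | succ m ih =>
    have : D b k (m + 2) = D b k (m + 1) + d b k (m + 2) := Finset.sum_range_succ _ _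
    rw [this, ih, d_lin b k (m + 1), Sf_succ b (m + 1), Sf_succ b m]
    ring

lemma d_pos (b k : ℝ) (hb : b > 4) (hk : 2 ≤ k) : ∀ n, 0 < d b k n := by
  intro n
  refine (grow b (le_of_lt hb) (d b k) (fun n => rfl) (by show (0:ℝ) < k; linarith) ?_ n).1
  show 2 * k ≤ k * b - b
  nlinarith

lemma D_pos (b k : ℝ) (hb : b > 4) (hk : 2 ≤ k) (h : ℕ) : 0 < D b k h := by
  apply Finset.sum_pos (fun i _ => d_pos b k hb hk i)
  exact Finset.nonempty_range_iff.mpr (Nat.succ_ne_zero h)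

lemma V_pos (b : ℝ) (hb : b > 4) :
    ∀ m, 0 < ff b (m + 1) * Sf b (m + 1) - ff b (m + 2) * Sf b m := by
  intro m
  induction m with
  | zero =>
    show 0 < ff b 1 * Sf b 1 - ff b 2 * Sf b 0
    have h1 : Sf b 1 = b * ff b 0 + 1 := Sf_eq b 0
    have h2 : ff b 2 = b * (ff b 1 - ff b 0) := rfl
    rw [h1, h2]
    show 0 < b * (b * 1 + 1) - b * (b - 1) * Sf b 0
    have : Sf b 0 = 1 := by simp [Sf, ff]
    rw [this]; nlinarith
  | succ n ih =>
    have h1 : ff b (n + 3) = b * (ff b (n + 2) - ff b (n + 1)) := rfl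
    have h2 : Sf b (n + 2) = Sf b (n + 1) + ff b (n + 2) := Sf_succ b (n + 1)
    have h3 : Sf b (n + 1) = Sf b n + ff b (n + 1) := Sf_succ b n
    have h4 : Sf b (n + 1) = b * ff b n + 1 := Sf_eq b n
    have h5 : ff b (n + 2) = b * (ff b (n + 1) - ff b n) := rfl
    have key : ff b (n + 2) * Sf b (n + 2) - ff b (n + 3) * Sf b (n + 1)
        = b * (ff b (n + 1) * Sf b (n + 1) - ff b (n + 2) * Sf b n) + ff b (n + 2) := by
      linear_combination ff b (n + 2) * h2 - Sf b (n + 1) * h1 + ff b (n + 2) * h4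
        + ff b (n + 2) * h5 - b * ff b (n + 2) * h3
    rw [key]
    have := ff_pos b hb (n + 2)
    nlinarith

theorem stmt_12 (b : ℝ) (hb : b > 4) (h : ℕ) (k k' : ℝ) (hk : 2 ≤ k) (hkk' : k < k') :
    Dbar b k h < Dbar b k' h := by
  have hk' : 2 ≤ k' := le_of_lt (lt_of_le_of_lt hk hkk')
  cases h with
  | zero => simpa [Dbar] using hkk'
  | succ n =>
    show D b k (n + 1) / (D b k n + 1) < D b k' (n + 1) / (D b k' n + 1)
    have hd1 : 0 < D b k n + 1 := by have := D_pos b k hb hk n; linarith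
    have hd2 : 0 < D b k' n + 1 := by have := D_pos b k' hb hk' n; linarith
    rw [div_lt_div_iff₀ hd1 hd2]
    cases n with
    | zero =>
      have e1 : D b k 1 = k * Sf b 1 - b * Sf b 0 := D_lin b k 0
      have e2 : D b k' 1 = k' * Sf b 1 - b * Sf b 0 := D_lin b k' 0
      have e3 : D b k 0 = k := by simp [D, d]
      have e4 : D b k' 0 = k' := by simp [D, d]
      have s0 : Sf b 0 = 1 := by simp [Sf, ff]
      have s1 : Sf b 1 = 1 + b := by
        rw [Sf_succ b 0, show ff b 1 = b from rfl]; simp [Sf, ff]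
      rw [e1, e2, e3, e4, s0, s1]
      nlinarith
    | succ m =>
      have e1 : D b k (m + 2) = k * Sf b (m + 2) - b * Sf b (m + 1) := D_lin b k (m + 1)
      have e2 : D b k' (m + 2) = k' * Sf b (m + 2) - b * Sf b (m + 1) := D_lin b k' (m + 1)
      have e3 : D b k (m + 1) = k * Sf b (m + 1) - b * Sf b m := D_lin b k m
      have e4 : D b k' (m + 1) = k' * Sf b (m + 1) - b * Sf b m := D_lin b k' m
      rw [e1, e2, e3, e4]
      have hV := V_pos b hb m
      have hSucc2 : Sf b (m + 2) = Sf b (m + 1) + ff b (m + 2) := Sf_succ b (m + 1)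
      have hSucc1 : Sf b (m + 1) = Sf b m + ff b (m + 1) := Sf_succ b m
      have hE : 0 < Sf b (m + 2) + b * (ff b (m + 1) * Sf b (m + 1) - ff b (m + 2) * Sf b m) := by
        have := Sf_pos b hb (m + 2)
        nlinarith
      have hiden : (k' * Sf b (m + 2) - b * Sf b (m + 1)) * (k * Sf b (m + 1) - b * Sf b m + 1)
          - (k * Sf b (m + 2) - b * Sf b (m + 1)) * (k' * Sf b (m + 1) - b * Sf b m + 1)
          = (k' - k) * (Sf b (m + 2)
            + b * (ff b (m + 1) * Sf b (m + 1) - ff b (m + 2) * Sf b m)) := by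
        rw [hSucc2, hSucc1]
        ring
      nlinarith [mul_pos (sub_pos.mpr hkk') hE]
end
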